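/- arXiv:2206.08409 — 4 statements merged into one kernel-verified Lean document; each statement's English description precedes it below -/
import Mathlib

section
/- Let α : ℝ → ℝ be continuous, strictly increasing with α(0) = 0. Let H : ℝ → ℝ be continuous on [0,∞) and differentiable at every t > 0 (with right differentiability at 0 also allowed to be assumed), and suppose H'(t) ≥ -α(H(t)) for all t ≥ 0. If H(0) ≥ 0, then H(t) ≥ 0 for all t ≥ 0. -/
/-!
Suppose `H T < 0` and let `s` be the last time in `[0, T]` with `H s ≥ 0`. On `(s, T]` the
function is negative, so `α (H t) < 0` and `H' t ≥ -α (H t) > 0`; the mean value theorem on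
`[s, T]` then gives `H T > H s ≥ 0`, a contradiction.
-/

open Set

theorem nonneg_on_Icc_of_deriv_pos_of_neg {f f' : ℝ → ℝ} {a b : ℝ}
    (hf : ContinuousOn f (Icc a b)) (hf' : ∀ x ∈ Ioo a b, HasDerivAt f (f' x) x)
    (hpos : ∀ x ∈ Ioo a b, f x < 0 → 0 < f' x) (ha : 0 ≤ f a) :
    ∀ x ∈ Icc a b, 0 ≤ f x := by
  intro x hx
  by_contra! hfx
  have hcompact : IsCompact (Icc a x ∩ f ⁻¹' Ici 0) :=
    isCompact_Icc.of_isClosed_subset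
      ((hf.mono (Icc_subset_Icc_right hx.2)).preimage_isClosed_of_isClosed isClosed_Icc
        isClosed_Ici)
      inter_subset_left
  obtain ⟨s, ⟨⟨has, hsx⟩, hfs⟩, hs_last⟩ :=
    hcompact.exists_isGreatest ⟨a, ⟨left_mem_Icc.2 hx.1, ha⟩⟩
  have hsx' : s < x := hsx.lt_of_ne (by rintro rfl; exact (not_le.2 hfx) hfs)
  have hneg : ∀ t ∈ Ioo s x, f t < 0 := fun t ht ↦ by
    by_contra! hft
    exact (not_le.2 ht.1) (hs_last ⟨⟨has.trans ht.1.le, ht.2.le⟩, hft⟩)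
  have hsub : Ioo s x ⊆ Ioo a b := Ioo_subset_Ioo has hx.2
  obtain ⟨c, hc, hslope⟩ := exists_hasDerivAt_eq_slope f f' hsx'
    (hf.mono (Icc_subset_Icc has hx.2)) fun t ht ↦ hf' t (hsub ht)
  have hslope_pos : 0 < (f x - f s) / (x - s) := hslope ▸ hpos c (hsub hc) (hneg c hc)
  have hincr : 0 < f x - f s := (div_pos_iff_of_pos_right (sub_pos.2 hsx')).1 hslope_pos
  linarith [show 0 ≤ f s from hfs]

theorem statement0_general (α H H' : ℝ → ℝ)
    (hα_mono : StrictMono α) (hα0 : α 0 = 0)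
    (hH_cont : ContinuousOn H (Set.Ici (0 : ℝ)))
    (hH_deriv : ∀ t > (0 : ℝ), HasDerivAt H (H' t) t)
    (hineq : ∀ t ≥ (0 : ℝ), H' t ≥ -α (H t))
    (h0 : H 0 ≥ 0) :
    ∀ t ≥ (0 : ℝ), H t ≥ 0 := by
  intro T hT
  have hpos : ∀ t > (0 : ℝ), H t < 0 → 0 < H' t := fun t ht hHt ↦ by
    have : α (H t) < 0 := hα0 ▸ hα_mono hHt
    linarith [hineq t ht.le]
  exact nonneg_on_Icc_of_deriv_pos_of_neg (hH_cont.mono Icc_subset_Ici_self)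
    (fun t ht ↦ hH_deriv t ht.1) (fun t ht ↦ hpos t ht.1) h0 T ⟨hT, le_rfl⟩

/-- Scalar differential-inequality forward-invariance lemma: if `α` is continuous,
strictly increasing with `α 0 = 0`, `H` is continuous on `[0, ∞)` and differentiable
(at every `t > 0`, and from the right at `0`) with `H' t ≥ -α (H t)` for all `t ≥ 0`,
and `H 0 ≥ 0`, then `H t ≥ 0` for all `t ≥ 0`. -/
theorem statement0 (α H H' : ℝ → ℝ)
    (hα_cont : Continuous α) (hα_mono : StrictMono α) (hα0 : α 0 = 0)
    (hH_cont : ContinuousOn H (Set.Ici (0 : ℝ)))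
    (hH_deriv : ∀ t > (0 : ℝ), HasDerivAt H (H' t) t)
    (hH_deriv0 : HasDerivWithinAt H (H' 0) (Set.Ici (0 : ℝ)) 0)
    (hineq : ∀ t ≥ (0 : ℝ), H' t ≥ -α (H t))
    (h0 : H 0 ≥ 0) :
    ∀ t ≥ (0 : ℝ), H t ≥ 0 :=
  statement0_general α H H' hα_mono hα0 hH_cont hH_deriv hineq h0
end

section
/- (Theorem 1, safety of ODEs via safety functions) Let n ∈ ℕ, let f : ℝⁿ → ℝⁿ be locally Lipschitz continuous, let h : ℝⁿ → ℝ be continuously differentiable, and let α : ℝ → ℝ be continuous, strictly increasing with α(0) = 0. Suppose that for all p ∈ ℝⁿ the Lie derivative satisfies Dh(p)(f(p)) ≥ -α(h(p)), where Dh(p) is the Fréchet derivative of h at p. Let x : ℝ → ℝⁿ be a solution of ẋ(t) = f(x(t)) for all t ≥ 0. If h(x(0)) ≥ 0, then h(x(t)) ≥ 0 for all t ≥ 0; that is, the set S = {p ∈ ℝⁿ : h(p) ≥ 0} is forward invariant. -/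
/-!
Along a trajectory, `y t = h (x t)` has derivative `Dh(x t)(f (x t)) ≥ -α (y t)`, and wherever
`y t < 0` strict monotonicity of `α` with `α 0 = 0` makes this lower bound strictly positive.
So if `y` became negative at some `t₁`, it would be strictly increasing on `[t₀, t₁]`, where `t₀`
is the last time before `t₁` at which `y ≥ 0`; then `0 ≤ y t₀ < y t₁ < 0`.
-/

open Set

theorem exists_last_nonneg_of_continuousOn {y : ℝ → ℝ} {a b : ℝ} (hab : a ≤ b)
    (hy : ContinuousOn y (Icc a b)) (ha : 0 ≤ y a) (hb : y b < 0) :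
    ∃ c ∈ Ico a b, 0 ≤ y c ∧ ∀ t ∈ Ioc c b, y t < 0 := by
  set S := Icc a b ∩ y ⁻¹' Ici 0
  have hSne : S.Nonempty := ⟨a, ⟨le_rfl, hab⟩, ha⟩
  have hSbdd : BddAbove S := ⟨b, fun t ht => ht.1.2⟩
  have hcS : sSup S ∈ S :=
    (hy.preimage_isClosed_of_isClosed isClosed_Icc isClosed_Ici).csSup_mem hSne hSbdd
  refine ⟨sSup S, ⟨hcS.1.1, hcS.1.2.lt_of_ne ?_⟩, hcS.2, fun t ht => ?_⟩
  · rintro hcb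
    exact hb.not_ge (hcb ▸ hcS.2)
  · by_contra! hyt
    exact ht.1.not_ge (le_csSup hSbdd ⟨⟨hcS.1.1.trans ht.1.le, ht.2⟩, hyt⟩)

theorem nonneg_of_hasDerivAt_pos_of_neg {y y' : ℝ → ℝ} {a : ℝ}
    (hderiv : ∀ t ≥ a, HasDerivAt y (y' t) t) (hpos : ∀ t ≥ a, y t < 0 → 0 < y' t)
    (ha : 0 ≤ y a) : ∀ t ≥ a, 0 ≤ y t := by
  intro b hab
  by_contra! hb
  have hcont : ContinuousOn y (Icc a b) := fun t ht =>
    (hderiv t ht.1).continuousAt.continuousWithinAt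
  obtain ⟨c, ⟨hac, hcb⟩, hc, hneg⟩ := exists_last_nonneg_of_continuousOn hab hcont ha hb
  have hmono : StrictMonoOn y (Icc c b) := by
    refine strictMonoOn_of_hasDerivWithinAt_pos (f' := y') (convex_Icc c b)
      (hcont.mono (Icc_subset_Icc_left hac)) (fun t ht => ?_) (fun t ht => ?_)
    · rw [interior_Icc] at ht
      exact (hderiv t (hac.trans ht.1.le)).hasDerivWithinAt
    · rw [interior_Icc] at ht
      exact hpos t (hac.trans ht.1.le) (hneg t ⟨ht.1, ht.2.le⟩)
  have hcb_lt : y c < y b := hmono (left_mem_Icc.2 hcb.le) (right_mem_Icc.2 hcb.le) hcb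
  linarith

theorem statement2_general (n : ℕ)
    (f : EuclideanSpace ℝ (Fin n) → EuclideanSpace ℝ (Fin n))
    (h : EuclideanSpace ℝ (Fin n) → ℝ) (α : ℝ → ℝ)
    (hh : ContDiff ℝ 1 h)
    (hα_mono : StrictMono α) (hα0 : α 0 = 0)
    (hsafe : ∀ p : EuclideanSpace ℝ (Fin n), fderiv ℝ h p (f p) ≥ -α (h p))
    (x : ℝ → EuclideanSpace ℝ (Fin n))
    (hx : ∀ t ≥ (0 : ℝ), HasDerivAt x (f (x t)) t)
    (h0 : h (x 0) ≥ 0) :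
    ∀ t ≥ (0 : ℝ), h (x t) ≥ 0 := by
  refine nonneg_of_hasDerivAt_pos_of_neg (y := fun t => h (x t))
    (y' := fun t => fderiv ℝ h (x t) (f (x t))) (fun t ht => ?_) (fun t _ hneg => ?_) h0
  · exact (hh.differentiable one_ne_zero).differentiableAt.hasFDerivAt.comp_hasDerivAt t (hx t ht)
  · have hα_neg : α (h (x t)) < 0 := hα0 ▸ hα_mono hneg
    linarith [hsafe (x t)]

/-- Theorem 1: safety of ODEs via safety functions. If `h` is continuously
differentiable, `f` is locally Lipschitz, `α` is continuous, strictly increasing with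
`α 0 = 0`, and the Lie derivative satisfies `Dh(p)(f(p)) ≥ -α (h p)` for all `p`,
then along any solution `x` of `ẋ = f(x)` with `h (x 0) ≥ 0` we have `h (x t) ≥ 0`
for all `t ≥ 0` (forward invariance of the 0-superlevel set of `h`). -/
theorem statement2 (n : ℕ)
    (f : EuclideanSpace ℝ (Fin n) → EuclideanSpace ℝ (Fin n))
    (h : EuclideanSpace ℝ (Fin n) → ℝ) (α : ℝ → ℝ)
    (hf : LocallyLipschitz f) (hh : ContDiff ℝ 1 h)
    (hα_cont : Continuous α) (hα_mono : StrictMono α) (hα0 : α 0 = 0)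
    (hsafe : ∀ p : EuclideanSpace ℝ (Fin n), fderiv ℝ h p (f p) ≥ -α (h p))
    (x : ℝ → EuclideanSpace ℝ (Fin n))
    (hx : ∀ t ≥ (0 : ℝ), HasDerivAt x (f (x t)) t)
    (h0 : h (x 0) ≥ 0) :
    ∀ t ≥ (0 : ℝ), h (x t) ≥ 0 :=
  statement2_general n f h α hh hα_mono hα0 hsafe x hx h0
end

section
/- (History-segment differentiability, used in the proof of Theorem 4) Let E be a real Banach space, τ > 0, and let x : ℝ → E be continuously differentiable. For each t ∈ ℝ define the history segment x_t ∈ C([-τ,0], E) by x_t(θ) = x(t+θ), and define ẋ_t ∈ C([-τ,0], E) by ẋ_t(θ) = x'(t+θ), where C([-τ,0], E) carries the supremum norm. Then the map t ↦ x_t from ℝ to C([-τ,0], E) is differentiable at every t ∈ ℝ, with derivative equal to ẋ_t. -/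
/-- History segment `x_t ∈ C([-τ,0], E)` of a continuous curve `x : ℝ → E`,
defined by `x_t θ = x (t + θ)`. -/
noncomputable def histSegment {E : Type*} [NormedAddCommGroup E]
    (τ : ℝ) (x : ℝ → E) (hx : Continuous x) (t : ℝ) :
    C(Set.Icc (-τ) (0 : ℝ), E) :=
  ⟨fun θ => x (t + θ), hx.comp (continuous_const.add continuous_subtype_val)⟩

/-!
Pointwise in `θ`, the derivative of `t ↦ x_t` is `ẋ_t`, and `t ↦ ẋ_t` is continuous in the
supremum norm because that norm induces the compact-open topology on `C([-τ,0], E)`. A pointwise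
derivative of a curve in `C(K, E)`, `K` compact, that is continuous in the supremum norm is a
derivative: the mean value inequality at each point of `K` bounds the remainder
`F s - F t - (s - t) • F' t` by `|s - t| * sup_{u ∈ [t, s]} ‖F' u - F' t‖`.
-/

open Filter Topology

theorem continuous_histSegment {E : Type*} [NormedAddCommGroup E] (τ : ℝ) {x : ℝ → E}
    (hx : Continuous x) : Continuous (histSegment τ x hx) :=
  (ContinuousMap.curry
    ⟨fun p : ℝ × Set.Icc (-τ) (0 : ℝ) => x (p.1 + p.2), by fun_prop⟩).continuous

section

variable {E : Type*} [NormedAddCommGroup E] [NormedSpace ℝ E]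

theorem Convex.norm_image_sub_sub_smul_le_of_norm_hasDerivWithin_sub_le {f f' : ℝ → E}
    {s : Set ℝ} {c : E} {C t r : ℝ} (hs : Convex ℝ s)
    (hf : ∀ u ∈ s, HasDerivWithinAt f (f' u) s u) (bound : ∀ u ∈ s, ‖f' u - c‖ ≤ C)
    (ht : t ∈ s) (hr : r ∈ s) : ‖f r - f t - (r - t) • c‖ ≤ C * ‖r - t‖ := by
  have hg : ∀ u ∈ s, HasDerivWithinAt (fun u => f u - u • c) (f' u - c) s u := fun u hu =>
    ((hf u hu).sub ((hasDerivWithinAt_id u s).smul_const c)).congr_deriv (by rw [one_smul])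
  calc ‖f r - f t - (r - t) • c‖ = ‖(f r - r • c) - (f t - t • c)‖ := by
        rw [sub_smul]; congr 1; abel
    _ ≤ C * ‖r - t‖ := hs.norm_image_sub_le_of_norm_hasDerivWithin_le hg bound ht hr

theorem ContinuousMap.hasDerivAt_of_hasDerivAt_apply {K : Type*} [TopologicalSpace K]
    [CompactSpace K] {F F' : ℝ → C(K, E)} {t : ℝ} (hF' : ContinuousAt F' t)
    (hF : ∀ᶠ s in 𝓝 t, ∀ k, HasDerivAt (fun r => F r k) (F' s k) s) :
    HasDerivAt F (F' t) t := by
  rw [hasDerivAt_iff_isLittleO, Asymptotics.isLittleO_iff]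
  intro ε hε
  obtain ⟨δ, hδ, hball⟩ := Metric.eventually_nhds_iff_ball.mp
    ((hF'.eventually (Metric.closedBall_mem_nhds (F' t) hε)).and hF)
  filter_upwards [Metric.ball_mem_nhds t hδ] with s hs
  rw [ContinuousMap.norm_le _ (by positivity)]
  intro k
  have bound : ∀ u ∈ Metric.ball t δ, ‖F' u k - F' t k‖ ≤ ε := fun u hu =>
    (ContinuousMap.norm_coe_le_norm (F' u - F' t) k).trans
      (mem_closedBall_iff_norm.mp (hball u hu).1)
  simpa using (convex_ball t δ).norm_image_sub_sub_smul_le_of_norm_hasDerivWithin_sub_le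
    (fun u hu => ((hball u hu).2 k).hasDerivWithinAt) bound (Metric.mem_ball_self hδ) hs

end

theorem statement5_general (E : Type*) [NormedAddCommGroup E] [NormedSpace ℝ E]
    (τ : ℝ)
    (x x' : ℝ → E) (hx : Continuous x) (hx' : Continuous x')
    (hd : ∀ t : ℝ, HasDerivAt x (x' t) t) :
    ∀ t : ℝ, HasDerivAt (fun s => histSegment τ x hx s) (histSegment τ x' hx' t) t := fun _ =>
  ContinuousMap.hasDerivAt_of_hasDerivAt_apply (continuous_histSegment τ hx').continuousAt
    (Eventually.of_forall fun s θ => (hd (s + θ)).comp_add_const s θ)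

/-- History-segment differentiability: if `x : ℝ → E` is continuously differentiable
(with continuous derivative `x'`), then the curve `t ↦ x_t` in `C([-τ,0], E)`
(supremum norm) is differentiable at every `t`, with derivative `ẋ_t : θ ↦ x' (t+θ)`. -/
theorem statement5 (E : Type*) [NormedAddCommGroup E] [NormedSpace ℝ E] [CompleteSpace E]
    (τ : ℝ) (hτ : 0 < τ)
    (x x' : ℝ → E) (hx : Continuous x) (hx' : Continuous x')
    (hd : ∀ t : ℝ, HasDerivAt x (x' t) t) :
    ∀ t : ℝ, HasDerivAt (fun s => histSegment τ x hx s) (histSegment τ x' hx' t) t :=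
  statement5_general E τ x x' hx hx' hd
end

section
/- (Theorem 6, extended control barrier functionals for delay-induced relative degree 2) Let E be a real Banach space, τ > 0, and let x : ℝ → E be continuously differentiable with history segments x_t(θ) = x(t+θ) in C([-τ,0], E). Let 𝓗, 𝓗ₑ : C([-τ,0], E) → ℝ, and let α, αₑ : ℝ → ℝ be continuous, strictly increasing with α(0) = 0 and αₑ(0) = 0. Suppose that for all t ≥ 0: (i) the function t ↦ 𝓗(x_t) is differentiable with derivative equal to 𝓗ₑ(x_t) − α(𝓗(x_t)) (i.e., 𝓗ₑ = 𝓗̇ + α∘𝓗 along the solution); and (ii) the function t ↦ 𝓗ₑ(x_t) is differentiable with derivative ≥ -αₑ(𝓗ₑ(x_t)). If 𝓗(x_0) ≥ 0 and 𝓗ₑ(x_0) ≥ 0, then for all t ≥ 0 both 𝓗(x_t) ≥ 0 and 𝓗ₑ(x_t) ≥ 0; that is, the intersection 𝓢 ∩ 𝓢ₑ of the 0-superlevel sets of 𝓗 and 𝓗ₑ is forward invariant along the solution. -/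
theorem nonneg_of_hasDerivAt_pos_of_neg_s12 {f f' : ℝ → ℝ} {a : ℝ}
    (hf : ∀ x ≥ a, HasDerivAt f (f' x) x) (hfa : 0 ≤ f a)
    (hf'_pos : ∀ x ≥ a, f x < 0 → 0 < f' x) : ∀ x ≥ a, 0 ≤ f x := by
  intro b hb
  refine le_of_forall_pos_le_add fun ε hε => ?_
  -- fence `-f` by the constant `ε`: it can only touch the fence where `f < 0`, i.e. `ḟ > 0`
  have hfence : -f b ≤ ε :=
    image_le_of_deriv_right_lt_deriv_boundary (f := -f) (f' := -f') (B := fun _ => ε)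
      (fun x hx => (hf x hx.1).continuousAt.neg.continuousWithinAt)
      (fun x hx => (hf x hx.1).neg.hasDerivWithinAt) (by simp only [Pi.neg_apply]; linarith)
      (fun x => hasDerivAt_const x ε)
      (fun x hx hfx => by
        have := hf'_pos x hx.1 (by simp only [Pi.neg_apply] at hfx; linarith)
        simp only [Pi.neg_apply]; linarith)
      ⟨hb, le_rfl⟩
  linarith

theorem nonneg_of_hasDerivAt_ge_neg_comp {f β : ℝ → ℝ} {a : ℝ} (hβ : ∀ r < 0, β r < 0)
    (hf : ∀ x ≥ a, ∃ d, HasDerivAt f d x ∧ d ≥ -β (f x)) (hfa : 0 ≤ f a) :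
    ∀ x ≥ a, 0 ≤ f x := by
  have hderiv : ∀ x ≥ a, HasDerivAt f (deriv f x) x := fun x hx =>
    let ⟨_, hd, _⟩ := hf x hx
    hd.differentiableAt.hasDerivAt
  refine nonneg_of_hasDerivAt_pos_of_neg_s12 hderiv hfa fun x hx hfx => ?_
  obtain ⟨d, hd, hdβ⟩ := hf x hx
  rw [hd.deriv]
  linarith [hβ _ hfx]

theorem statement12_general (E : Type*) [NormedAddCommGroup E]
    (τ : ℝ)
    (x : ℝ → E) (hx : Continuous x)
    (H He : C(Set.Icc (-τ) (0 : ℝ), E) → ℝ)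
    (α αe : ℝ → ℝ)
    (hα_mono : StrictMono α) (hα0 : α 0 = 0)
    (hαe_mono : StrictMono αe) (hαe0 : αe 0 = 0)
    (hH : ∀ t ≥ (0 : ℝ), HasDerivAt (fun s => H (histSegment τ x hx s))
      (He (histSegment τ x hx t) - α (H (histSegment τ x hx t))) t)
    (hHe : ∀ t ≥ (0 : ℝ), ∃ d : ℝ,
      HasDerivAt (fun s => He (histSegment τ x hx s)) d t ∧
        d ≥ -αe (He (histSegment τ x hx t)))
    (h0 : H (histSegment τ x hx 0) ≥ 0) (he0 : He (histSegment τ x hx 0) ≥ 0) :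
    ∀ t ≥ (0 : ℝ), H (histSegment τ x hx t) ≥ 0 ∧ He (histSegment τ x hx t) ≥ 0 := by
  have hHe_nonneg : ∀ t ≥ (0 : ℝ), 0 ≤ He (histSegment τ x hx t) :=
    nonneg_of_hasDerivAt_ge_neg_comp (fun r hr => hαe0 ▸ hαe_mono hr) hHe he0
  have hH_nonneg : ∀ t ≥ (0 : ℝ), 0 ≤ H (histSegment τ x hx t) :=
    nonneg_of_hasDerivAt_ge_neg_comp (fun r hr => hα0 ▸ hα_mono hr)
      (fun t ht => ⟨_, hH t ht, by linarith [hHe_nonneg t ht]⟩) h0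
  exact fun t ht => ⟨hH_nonneg t ht, hHe_nonneg t ht⟩

/-- Theorem 6: extended control barrier functionals for delay-induced relative
degree 2. If along the solution `t ↦ 𝓗(x_t)` is differentiable with derivative
`𝓗ₑ(x_t) − α(𝓗(x_t))` (i.e. `𝓗ₑ = 𝓗̇ + α ∘ 𝓗`), and `t ↦ 𝓗ₑ(x_t)` is
differentiable with derivative `≥ -αₑ(𝓗ₑ(x_t))`, then `𝓗(x_0) ≥ 0` and
`𝓗ₑ(x_0) ≥ 0` imply `𝓗(x_t) ≥ 0` and `𝓗ₑ(x_t) ≥ 0` for all `t ≥ 0`. -/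
theorem statement12 (E : Type*) [NormedAddCommGroup E] [NormedSpace ℝ E] [CompleteSpace E]
    (τ : ℝ) (hτ : 0 < τ)
    (x : ℝ → E) (hx : Continuous x)
    (hxd : ContDiff ℝ 1 x)
    (H He : C(Set.Icc (-τ) (0 : ℝ), E) → ℝ)
    (α αe : ℝ → ℝ)
    (hα_cont : Continuous α) (hα_mono : StrictMono α) (hα0 : α 0 = 0)
    (hαe_cont : Continuous αe) (hαe_mono : StrictMono αe) (hαe0 : αe 0 = 0)
    (hH : ∀ t ≥ (0 : ℝ), HasDerivAt (fun s => H (histSegment τ x hx s))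
      (He (histSegment τ x hx t) - α (H (histSegment τ x hx t))) t)
    (hHe : ∀ t ≥ (0 : ℝ), ∃ d : ℝ,
      HasDerivAt (fun s => He (histSegment τ x hx s)) d t ∧
        d ≥ -αe (He (histSegment τ x hx t)))
    (h0 : H (histSegment τ x hx 0) ≥ 0) (he0 : He (histSegment τ x hx 0) ≥ 0) :
    ∀ t ≥ (0 : ℝ), H (histSegment τ x hx t) ≥ 0 ∧ He (histSegment τ x hx t) ≥ 0 :=
  statement12_general E τ x hx H He α αe hα_mono hα0 hαe_mono hαe0 hH hHe h0 he0
end
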